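/- arXiv:2004.09436 — 12 statements merged into one kernel-verified Lean document; each statement's English description precedes it below -/
import Mathlib

section
/- Let p be an odd prime, n a positive integer, and d a positive integer. The monomial x^d is perfect (-1)-nonlinear on F_{p^n} (i.e., for every a in F_{p^n}, the map x ↦ (x+a)^d + x^d is a bijection of F_{p^n}) if and only if both x ↦ x^d and x ↦ (x+1)^d + (x-1)^d are bijections of F_{p^n}. -/
/-!
Write `g_a x = (x + a)^d + x^d`. Homogeneity gives `g_{ca}(c x) = c^d g_a(x)`, so for `a ≠ 0` the
map `g_a` is a bijection exactly when `g_2` is, and `g_2(x - 1) = (x + 1)^d + (x - 1)^d`. The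
remaining case `g_0 = 2 x^d` is a bijection exactly when `x ↦ x^d` is, since `2 ≠ 0` in odd
characteristic.
-/

open Function

section PowShiftSum

variable {F : Type*} [Field F] (d : ℕ)

theorem bijective_add_mul_pow_add_pow_iff {c : F} (hc : c ≠ 0) (a : F) :
    Bijective (fun x : F => (x + c * a) ^ d + x ^ d) ↔
      Bijective (fun x : F => (x + a) ^ d + x ^ d) := by
  have hconj : (fun x : F => (x + c * a) ^ d + x ^ d) ∘ Equiv.mulLeft₀ c hc =
      Equiv.mulLeft₀ (c ^ d) (pow_ne_zero d hc) ∘ (fun x : F => (x + a) ^ d + x ^ d) := by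
    funext x
    simp only [comp_apply, Equiv.mulLeft₀_apply, ← mul_add, mul_pow]
  rw [← EquivLike.bijective_comp (Equiv.mulLeft₀ c hc), hconj, EquivLike.comp_bijective]

theorem bijective_add_two_pow_add_pow_iff :
    Bijective (fun x : F => (x + 2) ^ d + x ^ d) ↔
      Bijective (fun x : F => (x + 1) ^ d + (x - 1) ^ d) := by
  have hshift : (fun x : F => (x + 2) ^ d + x ^ d) ∘ Equiv.subRight 1 =
      fun x : F => (x + 1) ^ d + (x - 1) ^ d := by
    funext x
    simp only [comp_apply, Equiv.subRight_apply]
    ring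
  rw [← EquivLike.bijective_comp (Equiv.subRight (1 : F)), hshift]

theorem bijective_add_zero_pow_add_pow_iff (h2 : (2 : F) ≠ 0) :
    Bijective (fun x : F => (x + 0) ^ d + x ^ d) ↔ Bijective (fun x : F => x ^ d) := by
  have hdouble : (fun x : F => (x + 0) ^ d + x ^ d) =
      Equiv.mulLeft₀ 2 h2 ∘ fun x : F => x ^ d := by
    funext x
    simp only [comp_apply, Equiv.mulLeft₀_apply]
    ring
  rw [hdouble, EquivLike.comp_bijective]

theorem forall_bijective_add_pow_add_pow_iff (h2 : (2 : F) ≠ 0) :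
    (∀ a : F, Bijective fun x : F => (x + a) ^ d + x ^ d) ↔
      Bijective (fun x : F => x ^ d) ∧ Bijective (fun x : F => (x + 1) ^ d + (x - 1) ^ d) := by
  simp only [← bijective_add_zero_pow_add_pow_iff d h2, ← bijective_add_two_pow_add_pow_iff d]
  refine ⟨fun h => ⟨h 0, h 2⟩, fun ⟨hzero, htwo⟩ a => ?_⟩
  rcases eq_or_ne a 0 with rfl | ha
  · exact hzero
  · have ha2 : a / 2 * 2 = a := div_mul_cancel₀ a h2
    rw [← ha2, bijective_add_mul_pow_add_pow_iff d (div_ne_zero ha h2)]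
    exact htwo

end PowShiftSum

theorem two_ne_zero_of_card_eq_pow {F : Type*} [Field F] [Fintype F] {p n : ℕ} (hp : p.Prime)
    (hp2 : p ≠ 2) (hF : Fintype.card F = p ^ n) : (2 : F) ≠ 0 := by
  have := Fact.mk hp
  have := charP_of_card_eq_prime_pow hF
  rw [← Nat.cast_ofNat, Ne, CharP.cast_eq_zero_iff F p, Nat.prime_dvd_prime_iff_eq hp Nat.prime_two]
  exact hp2

theorem stmt_0_general (p n d : ℕ) (hp : p.Prime) (hp2 : p ≠ 2)
    (F : Type) [Field F] [Fintype F] (hF : Fintype.card F = p ^ n) :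
    (∀ a : F, Function.Bijective fun x : F => (x + a) ^ d + x ^ d) ↔
      (Function.Bijective fun x : F => x ^ d) ∧
        (Function.Bijective fun x : F => (x + 1) ^ d + (x - 1) ^ d) :=
  forall_bijective_add_pow_add_pow_iff d (two_ne_zero_of_card_eq_pow hp hp2 hF)

theorem stmt_0 (p n d : ℕ) (hp : p.Prime) (hp2 : p ≠ 2) (hn : 0 < n) (hd : 0 < d)
    (F : Type) [Field F] [Fintype F] (hF : Fintype.card F = p ^ n) :
    (∀ a : F, Function.Bijective fun x : F => (x + a) ^ d + x ^ d) ↔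
      (Function.Bijective fun x : F => x ^ d) ∧
        (Function.Bijective fun x : F => (x + 1) ^ d + (x - 1) ^ d) :=
  stmt_0_general p n d hp hp2 F hF
end

section
/- Let p be an odd prime and ℓ, n positive integers with ℓ ≤ n. If n / gcd(ℓ, n) is odd, then gcd(p^ℓ + 1, p^n - 1) = 2. -/
/-!
Modulo any common divisor `g` of `p ^ ℓ + 1` and `p ^ n - 1` we have `p ^ ℓ = -1` and `p ^ n = 1`.
With `d = gcd ℓ n` and `m = n / d` odd, `p ^ (ℓ m) = (-1) ^ m = -1`, while `ℓ m = (ℓ / d) n` gives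
`p ^ (ℓ m) = 1`; hence `g ∣ 2`. Both numbers are even because `p` is odd.
-/

theorem neg_one_eq_one_of_pow_eq_neg_one_of_pow_eq_one {M : Type*} [Monoid M] [HasDistribNeg M]
    {x : M} {ℓ n : ℕ} (hxℓ : x ^ ℓ = -1) (hxn : x ^ n = 1) (h : Odd (n / ℓ.gcd n)) :
    (-1 : M) = 1 :=
  calc (-1 : M) = (x ^ ℓ) ^ (n / ℓ.gcd n) := by rw [hxℓ, h.neg_one_pow]
    _ = (x ^ n) ^ (ℓ / ℓ.gcd n) := by
      rw [← pow_mul, ← pow_mul, ← Nat.mul_div_assoc _ (Nat.gcd_dvd_right ℓ n),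
        ← Nat.mul_div_assoc _ (Nat.gcd_dvd_left ℓ n), mul_comm]
    _ = 1 := by rw [hxn, one_pow]

theorem Nat.gcd_pow_add_one_pow_sub_one_dvd_two {a : ℕ} (ha : 0 < a) {ℓ n : ℕ}
    (h : Odd (n / ℓ.gcd n)) : Nat.gcd (a ^ ℓ + 1) (a ^ n - 1) ∣ 2 := by
  set g := Nat.gcd (a ^ ℓ + 1) (a ^ n - 1)
  have haℓ : (a : ZMod g) ^ ℓ = -1 := by
    have hg : ((a ^ ℓ + 1 : ℕ) : ZMod g) = 0 :=
      (ZMod.natCast_eq_zero_iff _ _).mpr (Nat.gcd_dvd_left _ _)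
    push_cast at hg
    exact eq_neg_of_add_eq_zero_left hg
  have han : (a : ZMod g) ^ n = 1 := by
    have hg : ((a ^ n - 1 : ℕ) : ZMod g) = 0 :=
      (ZMod.natCast_eq_zero_iff _ _).mpr (Nat.gcd_dvd_right _ _)
    rw [Nat.cast_sub (Nat.one_le_pow _ _ ha)] at hg
    push_cast at hg
    exact sub_eq_zero.mp hg
  have htwo : ((2 : ℕ) : ZMod g) = 0 := by
    have := neg_one_eq_one_of_pow_eq_neg_one_of_pow_eq_one haℓ han h
    push_cast
    linear_combination -this
  exact (ZMod.natCast_eq_zero_iff _ _).mp htwo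

theorem Nat.two_dvd_gcd_pow_add_one_pow_sub_one {a : ℕ} (ha : Odd a) (ℓ n : ℕ) :
    2 ∣ Nat.gcd (a ^ ℓ + 1) (a ^ n - 1) :=
  Nat.dvd_gcd (even_iff_two_dvd.mp (ha.pow.add_one))
    (even_iff_two_dvd.mp (Nat.Odd.sub_odd ha.pow odd_one))

theorem stmt_2_general (p ℓ n : ℕ) (hp : p.Prime) (hp2 : p ≠ 2)
    (h : Odd (n / Nat.gcd ℓ n)) :
    Nat.gcd (p ^ ℓ + 1) (p ^ n - 1) = 2 :=
  Nat.dvd_antisymm (Nat.gcd_pow_add_one_pow_sub_one_dvd_two hp.pos h)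
    (Nat.two_dvd_gcd_pow_add_one_pow_sub_one (hp.odd_of_ne_two hp2) ℓ n)

theorem stmt_2 (p ℓ n : ℕ) (hp : p.Prime) (hp2 : p ≠ 2) (hℓ : 0 < ℓ) (hn : 0 < n)
    (hle : ℓ ≤ n) (h : Odd (n / Nat.gcd ℓ n)) :
    Nat.gcd (p ^ ℓ + 1) (p ^ n - 1) = 2 :=
  stmt_2_general p ℓ n hp hp2 h
end

section
/- Let p be an odd prime and ℓ, n positive integers with ℓ ≤ n. If n / gcd(ℓ, n) is even, then gcd(p^ℓ + 1, p^n - 1) = p^{gcd(ℓ,n)} + 1. -/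
/-!
Put `d = gcd ℓ n` and `x = p ^ d`; then `p ^ ℓ + 1 = x ^ k + 1` and `p ^ n - 1 = x ^ m - 1` with
`k, m` coprime and `m` even, so `k` is odd. A common divisor of `x ^ k + 1` and `x ^ m - 1` divides
`x ^ (2k) - 1`, hence `x ^ gcd (2k) m - 1 = x ^ 2 - 1`; modulo `x ^ 2 - 1` the odd power `x ^ k`
reduces to `x`, so it divides `gcd (x + 1) (x ^ 2 - 1) = x + 1`. Conversely `x + 1` divides
`x ^ k + 1` (`k` odd) and `x ^ 2 - 1 ∣ x ^ m - 1` (`m` even).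
-/

namespace Nat

theorem add_one_modEq_pow_add_one (x : ℕ) {k : ℕ} (hk : Odd k) :
    x + 1 ≡ x ^ k + 1 [MOD x ^ 2 - 1] := by
  obtain ⟨j, rfl⟩ := hk
  have hle : x ≤ x ^ (2 * j + 1) := Nat.le_self_pow (by omega) x
  rw [Nat.modEq_iff_dvd' (by omega), Nat.add_sub_add_right, _root_.pow_succ' x (2 * j), pow_mul,
    ← Nat.mul_sub_one]
  exact (sub_one_dvd_pow_sub_one (x ^ 2) j).mul_left x

theorem add_one_dvd_sq_sub_one (x : ℕ) : x + 1 ∣ x ^ 2 - 1 := by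
  rw [← one_pow 2, Nat.sq_sub_sq]
  exact Dvd.intro _ rfl

theorem gcd_pow_add_one_sq_sub_one (x : ℕ) {k : ℕ} (hk : Odd k) :
    gcd (x ^ k + 1) (x ^ 2 - 1) = x + 1 := by
  rw [← (add_one_modEq_pow_add_one x hk).gcd_eq, gcd_eq_left (add_one_dvd_sq_sub_one x)]

theorem gcd_pow_add_one_pow_sub_one (x : ℕ) {k m : ℕ} (hm : Even m) (hkm : k.Coprime m) :
    gcd (x ^ k + 1) (x ^ m - 1) = x + 1 := by
  have hk : Odd k := coprime_two_right.mp (hkm.coprime_dvd_right hm.two_dvd)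
  have hgcd : gcd (2 * k) m = 2 := by
    rw [gcd_comm, (coprime_two_left.mpr hk).gcd_mul, gcd_eq_right hm.two_dvd,
      gcd_comm, hkm, mul_one]
  apply dvd_antisymm
  · rw [← gcd_pow_add_one_sq_sub_one x hk]
    refine dvd_gcd (gcd_dvd_left _ _) ?_
    rw [← hgcd, ← pow_sub_one_gcd_pow_sub_one, pow_mul']
    exact gcd_dvd_gcd_of_dvd_left _ (by simpa using add_one_dvd_sq_sub_one (x ^ k))
  · refine dvd_gcd (by simpa using hk.nat_add_dvd_pow_add_pow x 1) ?_
    exact (add_one_dvd_sq_sub_one x).trans (pow_sub_one_dvd_pow_sub_one x hm.two_dvd)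

end Nat

theorem stmt_3_general (p ℓ n : ℕ) (hℓ : 0 < ℓ)
    (h : Even (n / Nat.gcd ℓ n)) :
    Nat.gcd (p ^ ℓ + 1) (p ^ n - 1) = p ^ Nat.gcd ℓ n + 1 := by
  set d := Nat.gcd ℓ n
  have hpow {a : ℕ} (hda : d ∣ a) : p ^ a = (p ^ d) ^ (a / d) := by
    rw [← pow_mul, Nat.mul_div_cancel' hda]
  rw [hpow (Nat.gcd_dvd_left ℓ n), hpow (Nat.gcd_dvd_right ℓ n)]
  exact Nat.gcd_pow_add_one_pow_sub_one _ h
    (Nat.coprime_div_gcd_div_gcd (Nat.gcd_pos_of_pos_left n hℓ))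

theorem stmt_3 (p ℓ n : ℕ) (hp : p.Prime) (hp2 : p ≠ 2) (hℓ : 0 < ℓ) (hn : 0 < n)
    (hle : ℓ ≤ n) (h : Even (n / Nat.gcd ℓ n)) :
    Nat.gcd (p ^ ℓ + 1) (p ^ n - 1) = p ^ Nat.gcd ℓ n + 1 :=
  stmt_3_general p ℓ n hℓ h
end

section
/- Let ℓ, n be positive integers. Then gcd(2^ℓ + 1, 2^n - 1) = (2^{gcd(n, 2ℓ)} - 1) / (2^{gcd(n, ℓ)} - 1). -/
/-!
Since `2 ^ (2ℓ) - 1 = (2 ^ ℓ + 1) (2 ^ ℓ - 1)` and the two factors are odd numbers differing by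
`2`, hence coprime, `gcd (2 ^ n - 1, 2 ^ (2ℓ) - 1)` splits as the product of
`gcd (2 ^ n - 1, 2 ^ ℓ + 1)` and `gcd (2 ^ n - 1, 2 ^ ℓ - 1)`. By `gcd (a ^ m - 1, a ^ k - 1) =
a ^ gcd (m, k) - 1` these are `2 ^ gcd (n, 2ℓ) - 1` and `2 ^ gcd (n, ℓ) - 1`.
-/

namespace Nat

theorem coprime_pow_add_one_pow_sub_one {a ℓ : ℕ} (ha : Even a) (hℓ : ℓ ≠ 0) :
    Coprime (a ^ ℓ + 1) (a ^ ℓ - 1) := by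
  rcases eq_zero_or_pos a with rfl | ha₀
  · simp [hℓ]
  have hodd : Odd (a ^ ℓ - 1) :=
    Even.sub_odd (one_le_pow _ _ ha₀) (ha.pow_of_ne_zero hℓ) odd_one
  have hsum : a ^ ℓ + 1 = 2 + (a ^ ℓ - 1) := by
    have := one_le_pow ℓ a ha₀
    omega
  rw [Coprime, hsum, gcd_add_self_left, coprime_two_left.mpr hodd]

theorem gcd_pow_add_one_pow_sub_one_mul {a ℓ : ℕ} (ha : Even a) (hℓ : ℓ ≠ 0) (n : ℕ) :
    gcd (a ^ ℓ + 1) (a ^ n - 1) * (a ^ gcd n ℓ - 1) = a ^ gcd n (2 * ℓ) - 1 := by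
  have hsplit : a ^ (2 * ℓ) - 1 = (a ^ ℓ + 1) * (a ^ ℓ - 1) := by
    rw [mul_comm, pow_mul, ← sq_sub_sq, one_pow]
  rw [← pow_sub_one_gcd_pow_sub_one, ← pow_sub_one_gcd_pow_sub_one, hsplit,
    (coprime_pow_add_one_pow_sub_one ha hℓ).gcd_mul, gcd_comm (a ^ n - 1) (a ^ ℓ + 1)]

end Nat

theorem stmt_4_general (ℓ n : ℕ) (hℓ : 0 < ℓ) :
    Nat.gcd (2 ^ ℓ + 1) (2 ^ n - 1) =
      (2 ^ Nat.gcd n (2 * ℓ) - 1) / (2 ^ Nat.gcd n ℓ - 1) := by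
  have hpos : 0 < 2 ^ Nat.gcd n ℓ - 1 := by
    have := Nat.one_lt_two_pow (Nat.gcd_pos_of_pos_right n hℓ).ne'
    omega
  rw [← Nat.gcd_pow_add_one_pow_sub_one_mul even_two hℓ.ne', Nat.mul_div_cancel _ hpos]

theorem stmt_4 (ℓ n : ℕ) (hℓ : 0 < ℓ) (hn : 0 < n) :
    Nat.gcd (2 ^ ℓ + 1) (2 ^ n - 1) =
      (2 ^ Nat.gcd n (2 * ℓ) - 1) / (2 ^ Nat.gcd n ℓ - 1) :=
  stmt_4_general ℓ n hℓ
end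

section
/- Let p be an odd prime and let k ≥ 1. Set ℓ = k+1 and d = (p^ℓ + 1)/2. Then for every q = p^n and every α in F_q, writing u for a root in F_{q^2} of z^2 - 2αz + 1, one has (α+1)^d + (α-1)^d = 2·((u/2)^d + (u^{-1}/2)^d). In particular, (x+1)^d + (x-1)^d = 2·D_d(x, 1/4) as functions on F_q, where D_d(x,a) is the d-th Dickson polynomial of the first kind. -/
open Polynomial

theorem Polynomial.dickson_one_eval_add_of_mul_eq {R : Type*} [CommRing R] {a x y : R}
    (h : x * y = a) : ∀ n, (dickson 1 a n).eval (x + y) = x ^ n + y ^ n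
  | 0 => by simp only [dickson_zero, pow_zero]; norm_num
  | 1 => by simp only [dickson_one, eval_X, pow_one]
  | n + 2 => by
    simp only [dickson_add_two, eval_sub, eval_mul, eval_X, eval_C,
      dickson_one_eval_add_of_mul_eq h (n + 1), dickson_one_eval_add_of_mul_eq h n]
    subst h
    ring

/-- `(u + 1)² = 2u(a + 1)` and `(u - 1)² = 2u(a - 1)`, so multiplying by `(2u)ᵈ` turns the
`d`-th powers into `(u ± 1)^(2d) = (u ± 1)^(p^k) (u ± 1) = (u^(p^k) ± 1)(u ± 1)` by Frobenius. -/
theorem add_one_pow_add_sub_one_pow_eq {L : Type*} [Field L] {p : ℕ} [CharP L p]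
    (hp : p.Prime) (hp2 : p ≠ 2) (k : ℕ) {a u : L} (hu : u ^ 2 - 2 * a * u + 1 = 0) :
    (a + 1) ^ ((p ^ k + 1) / 2) + (a - 1) ^ ((p ^ k + 1) / 2) =
      2 * ((u / 2) ^ ((p ^ k + 1) / 2) + (u⁻¹ / 2) ^ ((p ^ k + 1) / 2)) := by
  have : Fact p.Prime := ⟨hp⟩
  have h2 : (2 : L) ≠ 0 := Ring.two_ne_zero (by rwa [ringChar.eq L p])
  have hu0 : u ≠ 0 := by rintro rfl; simp at hu
  obtain ⟨t, ht⟩ := (hp.odd_of_ne_two hp2).pow (n := k)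
  set d := (p ^ k + 1) / 2
  have hd : p ^ k + 1 = 2 * d := by omega
  have hplus : (u + 1) ^ 2 = 2 * u * (a + 1) := by linear_combination hu
  have hminus : (u - 1) ^ 2 = 2 * u * (a - 1) := by linear_combination hu
  have key : (2 * u) ^ d * ((a + 1) ^ d + (a - 1) ^ d) = 2 * (u ^ (2 * d) + 1) :=
    calc (2 * u) ^ d * ((a + 1) ^ d + (a - 1) ^ d)
        = (u + 1) ^ (2 * d) + (u - 1) ^ (2 * d) := by
          rw [pow_mul, pow_mul, hplus, hminus, mul_add, ← mul_pow, ← mul_pow]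
      _ = (u + 1) ^ p ^ k * (u + 1) + (u - 1) ^ p ^ k * (u - 1) := by rw [← hd, pow_succ, pow_succ]
      _ = (u ^ p ^ k + 1) * (u + 1) + (u ^ p ^ k - 1) * (u - 1) := by
        rw [add_pow_char_pow, sub_pow_char_pow, one_pow]
      _ = 2 * (u ^ (2 * d) + 1) := by rw [← hd]; ring
  have hhalf : 2 * u * (u / 2) = u ^ 2 := by field_simp
  have hinv_half : 2 * u * (u⁻¹ / 2) = 1 := by field_simp
  apply mul_left_cancel₀ (pow_ne_zero d (mul_ne_zero h2 hu0))
  calc (2 * u) ^ d * ((a + 1) ^ d + (a - 1) ^ d)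
      = 2 * ((2 * u * (u / 2)) ^ d + (2 * u * (u⁻¹ / 2)) ^ d) := by
        rw [key, hhalf, hinv_half, one_pow, ← pow_mul]
    _ = (2 * u) ^ d * (2 * ((u / 2) ^ d + (u⁻¹ / 2) ^ d)) := by rw [mul_pow, mul_pow]; ring

theorem exists_sq_sub_two_mul_add_one_eq_zero {L : Type*} [Field L] [IsAlgClosed L] (a : L) :
    ∃ u : L, u ^ 2 - 2 * a * u + 1 = 0 := by
  obtain ⟨s, hs⟩ := IsAlgClosed.exists_pow_nat_eq (a ^ 2 - 1) two_pos
  exact ⟨a + s, by linear_combination hs⟩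

theorem add_one_pow_add_sub_one_pow_eq_two_mul_dickson {F : Type*} [Field F] {p : ℕ} [CharP F p]
    (hp : p.Prime) (hp2 : p ≠ 2) (k : ℕ) (x : F) :
    (x + 1) ^ ((p ^ k + 1) / 2) + (x - 1) ^ ((p ^ k + 1) / 2) =
      2 * (dickson 1 (4⁻¹ : F) ((p ^ k + 1) / 2)).eval x := by
  set φ := algebraMap F (AlgebraicClosure F)
  have : CharP (AlgebraicClosure F) p := charP_of_injective_algebraMap φ.injective p
  have h2 : (2 : AlgebraicClosure F) ≠ 0 := Ring.two_ne_zero (by rwa [ringChar.eq _ p])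
  obtain ⟨u, hu⟩ := exists_sq_sub_two_mul_add_one_eq_zero (φ x)
  have hu0 : u ≠ 0 := by rintro rfl; simp at hu
  have hsum : u / 2 + u⁻¹ / 2 = φ x := by
    field_simp
    linear_combination hu
  have hprod : u / 2 * (u⁻¹ / 2) = 4⁻¹ := by
    rw [div_mul_div_comm, mul_inv_cancel₀ hu0]; norm_num
  apply φ.injective
  rw [map_mul, map_ofNat, ← eval_map_apply, map_dickson, map_inv₀, map_ofNat, ← hsum,
    dickson_one_eval_add_of_mul_eq hprod, ← add_one_pow_add_sub_one_pow_eq hp hp2 k hu]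
  simp only [map_add, map_sub, map_pow, map_one]

theorem stmt_5_general (p n k : ℕ) (hp : p.Prime) (hp2 : p ≠ 2)
    (F K : Type) [Field F] [Fintype F] [Field K] [Algebra F K]
    (hF : Fintype.card F = p ^ n) :
    (∀ (α : F) (u : K), u ^ 2 - 2 * algebraMap F K α * u + 1 = 0 →
        algebraMap F K ((α + 1) ^ ((p ^ (k + 1) + 1) / 2) + (α - 1) ^ ((p ^ (k + 1) + 1) / 2)) =
          2 * ((u / 2) ^ ((p ^ (k + 1) + 1) / 2) + (u⁻¹ / 2) ^ ((p ^ (k + 1) + 1) / 2))) ∧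
      ∀ x : F, (x + 1) ^ ((p ^ (k + 1) + 1) / 2) + (x - 1) ^ ((p ^ (k + 1) + 1) / 2) =
        2 * Polynomial.eval x (Polynomial.dickson 1 (4⁻¹ : F) ((p ^ (k + 1) + 1) / 2)) := by
  have : Fact p.Prime := ⟨hp⟩
  have : CharP F p := charP_of_card_eq_prime_pow hF
  have : CharP K p := charP_of_injective_algebraMap (algebraMap F K).injective p
  refine ⟨fun α u hu => ?_, add_one_pow_add_sub_one_pow_eq_two_mul_dickson hp hp2 (k + 1)⟩
  rw [← add_one_pow_add_sub_one_pow_eq hp hp2 (k + 1) hu]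
  simp only [map_add, map_sub, map_pow, map_one]

theorem stmt_5 (p n k : ℕ) (hp : p.Prime) (hp2 : p ≠ 2) (hn : 0 < n) (hk : 1 ≤ k)
    (F K : Type) [Field F] [Fintype F] [Field K] [Fintype K] [Algebra F K]
    (hF : Fintype.card F = p ^ n) (hK : Fintype.card K = p ^ (2 * n)) :
    (∀ (α : F) (u : K), u ^ 2 - 2 * algebraMap F K α * u + 1 = 0 →
        algebraMap F K ((α + 1) ^ ((p ^ (k + 1) + 1) / 2) + (α - 1) ^ ((p ^ (k + 1) + 1) / 2)) =
          2 * ((u / 2) ^ ((p ^ (k + 1) + 1) / 2) + (u⁻¹ / 2) ^ ((p ^ (k + 1) + 1) / 2))) ∧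
      ∀ x : F, (x + 1) ^ ((p ^ (k + 1) + 1) / 2) + (x - 1) ^ ((p ^ (k + 1) + 1) / 2) =
        2 * Polynomial.eval x (Polynomial.dickson 1 (4⁻¹ : F) ((p ^ (k + 1) + 1) / 2)) :=
  stmt_5_general p n k hp hp2 F K hF
end

section
/- Let p > 3 be a prime and let d = a₀ with 4 ≤ a₀ ≤ p-1. If there exists ε in F_p* such that (x+1)^d + (x-1)^d = 2·D_d(x, ε) as polynomials over F_p, then a₀ = (p+1)/2. -/
/-!
In `(x + 1) ^ d + (x - 1) ^ d` the coefficients of `x ^ (d - 2)` and `x ^ (d - 4)` are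
`2 * choose d 2` and `2 * choose d 4`; in `2 * D_d(x, ε)` they are `-2 d ε` and `d (d - 3) ε ^ 2`.
As `d`, `d - 1` and `d - 3` are units mod `p`, the first comparison gives `2 ε = 1 - d`, and
substituting into the second leaves `d - 2 = 3 (d - 1)`, i.e. `p ∣ 2 d - 1`. Since
`0 < 2 d - 1 < 2 p`, this forces `2 d - 1 = p`.
-/

open Polynomial

namespace Polynomial

theorem coeff_X_add_one_pow_add_X_sub_one_pow {R : Type*} [Ring R] (n k : ℕ) :
    ((X + 1) ^ (n + k) + (X - 1) ^ (n + k) : R[X]).coeff n =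
      (1 + (-1) ^ k) * ((n + k).choose k : R) := by
  rw [coeff_add, coeff_X_add_one_pow, sub_eq_add_neg, ← C_1, ← C_neg, coeff_X_add_C_pow,
    Nat.add_sub_cancel_left, Nat.choose_symm_add]
  noncomm_ring

variable {R : Type*} [CommRing R] (k : ℕ) (a : R)

theorem coeff_dickson_add_two_succ (n j : ℕ) :
    (dickson k a (n + 2)).coeff (j + 1) =
      (dickson k a (n + 1)).coeff j - a * (dickson k a n).coeff (j + 1) := by
  rw [dickson_add_two, coeff_sub, coeff_X_mul, coeff_C_mul]

theorem coeff_dickson_add_two_zero (n : ℕ) :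
    (dickson k a (n + 2)).coeff 0 = -(a * (dickson k a n).coeff 0) := by
  rw [dickson_add_two, coeff_sub, coeff_X_mul_zero, coeff_C_mul, zero_sub]

theorem coeff_dickson_of_lt {n j : ℕ} (h : n < j) : (dickson k a n).coeff j = 0 := by
  induction n using Nat.twoStepInduction generalizing j with
  | zero => obtain ⟨j, rfl⟩ := Nat.exists_eq_add_of_lt h; simp [dickson_zero]
  | one => simp [dickson_one, coeff_X, h.ne]
  | more n ih₀ ih₁ =>
    obtain ⟨j, rfl⟩ : ∃ i, j = i + 1 := ⟨j - 1, by omega⟩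
    rw [coeff_dickson_add_two_succ, ih₁ (by omega), ih₀ (by omega), mul_zero, sub_zero]

theorem coeff_dickson_succ_self (n : ℕ) : (dickson k a (n + 1)).coeff (n + 1) = 1 := by
  induction n with
  | zero => simp [dickson_one]
  | succ n ih =>
    rw [coeff_dickson_add_two_succ, ih, coeff_dickson_of_lt k a (by omega), mul_zero, sub_zero]

theorem coeff_dickson_add_two (n : ℕ) :
    (dickson k a (n + 2)).coeff n = -((n + 3 - k : R) * a) := by
  induction n with
  | zero =>
    rw [coeff_dickson_add_two_zero, dickson_zero]
    simp only [coeff_sub, coeff_ofNat_zero, coeff_natCast_ite, ↓reduceIte, Nat.cast_zero, zero_add,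
      mul_comm]
  | succ n ih => rw [coeff_dickson_add_two_succ, ih, coeff_dickson_succ_self]; push_cast; ring

theorem two_mul_coeff_dickson_add_four (n : ℕ) :
    2 * (dickson k a (n + 4)).coeff n = (n + 1) * (n + 6 - 2 * k : R) * a ^ 2 := by
  induction n with
  | zero => rw [coeff_dickson_add_two_zero, coeff_dickson_add_two]; push_cast; ring
  | succ n ih =>
    rw [coeff_dickson_add_two_succ, mul_sub, ih, coeff_dickson_add_two]; push_cast; ring

end Polynomial

theorem Nat.add_two_choose_two_mul (n : ℕ) : (n + 2).choose 2 * 2 = (n + 2) * (n + 1) := by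
  have := Nat.descFactorial_eq_factorial_mul_choose (n + 2) 2
  simp only [Nat.descFactorial_succ, Nat.add_one_sub_one, tsub_zero, Nat.descFactorial_zero,
    mul_one, Nat.factorial, Nat.succ_eq_add_one, Nat.reduceAdd, zero_add] at this
  linarith

theorem Nat.add_four_choose_four_mul (n : ℕ) :
    (n + 4).choose 4 * 24 = (n + 4) * (n + 3) * (n + 2) * (n + 1) := by
  have := Nat.descFactorial_eq_factorial_mul_choose (n + 4) 4
  simp only [Nat.descFactorial_succ, Nat.reduceSubDiff, Nat.add_one_sub_one, tsub_zero,
    Nat.descFactorial_zero, mul_one, Nat.factorial, Nat.succ_eq_add_one, Nat.reduceAdd, zero_add,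
    Nat.reduceMul] at this
  linarith

theorem coeff_relations_of_pow_add_pow_eq_two_mul_dickson {R : Type*} [CommRing R] {n : ℕ}
    {ε : R} (h : ((X + 1) ^ (n + 4) + (X - 1) ^ (n + 4) : R[X]) = 2 * dickson 1 ε (n + 4)) :
    ((n : R) + 4) * (n + 3) = -(2 * (n + 4) * ε) ∧
      ((n : R) + 4) * (n + 3) * (n + 2) * (n + 1) = 12 * (n + 4) * (n + 1) * ε ^ 2 := by
  have e2 := congrArg (coeff · (n + 2)) h
  have e4 := congrArg (coeff · n) h
  rw [show n + 4 = n + 2 + 2 from rfl, coeff_X_add_one_pow_add_X_sub_one_pow, coeff_ofNat_mul,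
    coeff_dickson_add_two] at e2
  rw [coeff_X_add_one_pow_add_X_sub_one_pow, coeff_ofNat_mul, two_mul_coeff_dickson_add_four] at e4
  have c2 := congrArg (Nat.cast : ℕ → R) (Nat.add_two_choose_two_mul (n + 2))
  have c4 := congrArg (Nat.cast : ℕ → R) (Nat.add_four_choose_four_mul n)
  push_cast at e2 e4 c2 c4
  constructor
  · linear_combination e2 - c2
  · linear_combination 12 * e4 - c4

theorem stmt_6_general (p d : ℕ) (hp : p.Prime) (hd4 : 4 ≤ d) (hdp : d ≤ p - 1)
    (ε : ZMod p)
    (h : ((Polynomial.X + 1) ^ d + (Polynomial.X - 1) ^ d : Polynomial (ZMod p)) =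
        2 * Polynomial.dickson 1 ε d) :
    d = (p + 1) / 2 := by
  have : Fact p.Prime := ⟨hp⟩
  obtain ⟨n, rfl⟩ : ∃ n, d = n + 4 := ⟨d - 4, by omega⟩
  have natCast_ne_zero {j : ℕ} (hj : 0 < j) (hjp : j < p) : (j : ZMod p) ≠ 0 :=
    (ZMod.natCast_eq_zero_iff j p).not.mpr (Nat.not_dvd_of_pos_of_lt hj hjp)
  obtain ⟨h2, h4⟩ := coeff_relations_of_pow_add_pow_eq_two_mul_dickson h
  have hε : 2 * ε = -(n + 3) := by
    refine mul_left_cancel₀ (natCast_ne_zero (j := n + 4) (by omega) (by omega)) ?_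
    push_cast
    linear_combination h2
  have hprod : (((n + 4) * (n + 3) * (n + 1) : ℕ) : ZMod p) * ((2 * n + 7 : ℕ) : ZMod p) = 0 := by
    push_cast
    linear_combination -h4 + 3 * (n + 4) * (n + 1) * (n + 3 - 2 * ε) * hε
  have hp_dvd : p ∣ 2 * n + 7 := (ZMod.natCast_eq_zero_iff _ p).mp <|
    (mul_eq_zero.mp hprod).resolve_left <| by
      simp only [Nat.cast_mul]
      exact mul_ne_zero (mul_ne_zero (natCast_ne_zero (by omega) (by omega))
        (natCast_ne_zero (by omega) (by omega))) (natCast_ne_zero (by omega) (by omega))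
  have := Nat.eq_of_dvd_of_lt_two_mul (by omega) hp_dvd (by omega)
  omega

theorem stmt_6 (p d : ℕ) (hp : p.Prime) (hp3 : 3 < p) (hd4 : 4 ≤ d) (hdp : d ≤ p - 1)
    (ε : ZMod p) (hε : ε ≠ 0)
    (h : ((Polynomial.X + 1) ^ d + (Polynomial.X - 1) ^ d : Polynomial (ZMod p)) =
        2 * Polynomial.dickson 1 ε d) :
    d = (p + 1) / 2 :=
  stmt_6_general p d hp hd4 hdp ε h
end

section
/- Let p be an odd prime and n ≥ 2. The power map x ↦ x^{(p^ℓ+1)/2} is a permutation of F_{p^n} if and only if one of the following holds: (1) ℓ = 0; (2) ℓ is even and n is odd; (3) ℓ and n are both even and, writing n = 2^{t₁}·u and ℓ = 2^{t₂}·v with u, v odd, one has t₂ ≥ t₁; (4) ℓ is odd, n is odd, and p ≡ 1 (mod 4). -/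
/-!
A power map `x ↦ x ^ e` permutes `𝔽_{p^n}` iff `gcd(e, p^n - 1) = 1`. For `e = (p^ℓ + 1)/2` with
`ℓ ≠ 0` this holds iff `p^ℓ ≡ 1 (mod 4)` (so that `e` is odd, `p^n - 1` being even) and
`v₂(n) ≤ v₂(ℓ)`. If an odd prime `r` divides `p^ℓ + 1` and `p^n - 1`, the order of `p` modulo `r`
divides `n` and `2ℓ` but not `ℓ`, which forces `v₂(ℓ) < v₂(n)`. Conversely, if `v₂(ℓ) < v₂(n)`
and `d = 2^{v₂(ℓ)}`, then `p^d + 1` divides `p^ℓ + 1` (as `ℓ / d` is odd) and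
`p^{2d} - 1 ∣ p^n - 1`, so `(p^d + 1)/2 > 1` divides both `e` and `p^n - 1`.
-/

open Function

theorem pow_bijective_iff_coprime_card {G : Type*} [Group G] [Finite G] {e : ℕ} :
    Bijective (fun x : G => x ^ e) ↔ (Nat.card G).Coprime e := by
  refine ⟨fun h => Nat.coprime_of_dvd fun r hr hrG hre => ?_, Nat.Coprime.pow_left_bijective⟩
  have : Fact r.Prime := ⟨hr⟩
  obtain ⟨ζ, hζ⟩ := exists_prime_orderOf_dvd_card' r hrG
  have hζ1 : ζ = 1 := h.injective <| by
    simpa only [one_pow] using orderOf_dvd_iff_pow_eq_one.1 (hζ ▸ hre)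
  exact hr.one_lt.ne' (by rw [← hζ, hζ1, orderOf_one])

theorem pow_bijective_iff_units {M₀ : Type*} [GroupWithZero M₀] [Finite M₀] {e : ℕ} (he : e ≠ 0) :
    Bijective (fun x : M₀ => x ^ e) ↔ Bijective (fun x : M₀ˣ => x ^ e) := by
  rw [← Finite.injective_iff_bijective, ← Finite.injective_iff_bijective]
  refine ⟨fun h x y hxy => Units.ext (h (by simpa using congrArg Units.val hxy)),
    fun h x y (hxy : x ^ e = y ^ e) => ?_⟩
  by_cases hx : x = 0
  · rw [hx, eq_comm, ← pow_eq_zero_iff he, ← hxy, hx, zero_pow he]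
  have hy : y ≠ 0 := by rwa [ne_eq, ← pow_eq_zero_iff he, ← hxy, pow_eq_zero_iff he]
  exact congrArg Units.val
    (h (a₁ := Units.mk0 x hx) (a₂ := Units.mk0 y hy) (Units.ext (by simpa using hxy)))

namespace Nat

theorem factorization_two_pow_mul_of_odd {t u : ℕ} (hu : Odd u) :
    (2 ^ t * u).factorization 2 = t := by
  rw [factorization_mul (by positivity) hu.pos.ne', Finsupp.add_apply, factorization_pow,
    factorization_eq_zero_of_not_dvd hu.not_two_dvd_nat]
  simp [prime_two.factorization_self]

theorem factorization_two_le_iff_forall_eq_two_pow_mul_odd {n ℓ : ℕ} (hn : n ≠ 0) (hℓ : ℓ ≠ 0) :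
    n.factorization 2 ≤ ℓ.factorization 2 ↔
      ∀ t₁ u t₂ v : ℕ, Odd u → Odd v → n = 2 ^ t₁ * u → ℓ = 2 ^ t₂ * v → t₁ ≤ t₂ := by
  constructor
  · rintro h t₁ u t₂ v hu hv rfl rfl
    simpa only [factorization_two_pow_mul_of_odd hu, factorization_two_pow_mul_of_odd hv] using h
  · intro h
    obtain ⟨t₁, u, hu, rfl⟩ := exists_eq_two_pow_mul_odd hn
    obtain ⟨t₂, v, hv, rfl⟩ := exists_eq_two_pow_mul_odd hℓ
    simpa only [factorization_two_pow_mul_of_odd hu, factorization_two_pow_mul_of_odd hv]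
      using h _ _ _ _ hu hv rfl rfl

theorem dvd_of_dvd_two_mul_of_factorization_two_le {k n ℓ : ℕ} (hn : n ≠ 0) (hkn : k ∣ n)
    (hkℓ : k ∣ 2 * ℓ) (h : n.factorization 2 ≤ ℓ.factorization 2) : k ∣ ℓ := by
  rcases eq_or_ne ℓ 0 with rfl | hℓ
  · exact dvd_zero k
  have hk : k ≠ 0 := ne_zero_of_dvd_ne_zero hn hkn
  rw [← factorization_le_iff_dvd hk hℓ]
  intro q
  rcases eq_or_ne q 2 with rfl | hq
  · exact ((factorization_le_iff_dvd hk hn).2 hkn 2).trans h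
  · simpa [factorization_mul two_ne_zero hℓ, prime_two.factorization, Finsupp.single_eq_of_ne hq]
      using (factorization_le_iff_dvd hk (by positivity)).2 hkℓ q

theorem factorization_two_eq_zero_iff_odd {m : ℕ} (hm : m ≠ 0) :
    m.factorization 2 = 0 ↔ Odd m := by
  simp [factorization_eq_zero_iff, hm, prime_two, ← not_even_iff_odd, even_iff_two_dvd]

theorem pow_mod_four_eq_one_iff {a ℓ : ℕ} (ha : Odd a) : a ^ ℓ % 4 = 1 ↔ Even ℓ ∨ a % 4 = 1 := by
  have hsq : a ^ 2 % 4 = 1 := by obtain ⟨j, rfl⟩ := ha; ring_nf; omega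
  rcases even_or_odd' ℓ with ⟨k, rfl | rfl⟩
  · simp [pow_mul, pow_mod, hsq]
  · rw [pow_succ, pow_mul, mul_mod, pow_mod, hsq]
    simp [parity_simps]

end Nat

theorem factorization_two_lt_of_pow_eq_one {G : Type*} [Monoid G] {x : G} {ℓ n : ℕ} (hn : n ≠ 0)
    (hxn : x ^ n = 1) (hx2ℓ : x ^ (2 * ℓ) = 1) (hxℓ : x ^ ℓ ≠ 1) :
    ℓ.factorization 2 < n.factorization 2 := by
  by_contra! h
  exact hxℓ <| orderOf_dvd_iff_pow_eq_one.1 <| Nat.dvd_of_dvd_two_mul_of_factorization_two_le hn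
    (orderOf_dvd_of_pow_eq_one hxn) (orderOf_dvd_of_pow_eq_one hx2ℓ) h

namespace Nat

theorem coprime_half_pow_add_one_of_factorization_two_le {a ℓ n : ℕ} (ha : 0 < a) (hn : n ≠ 0)
    (h4 : a ^ ℓ % 4 = 1) (h : n.factorization 2 ≤ ℓ.factorization 2) :
    Coprime ((a ^ ℓ + 1) / 2) (a ^ n - 1) := by
  refine coprime_of_dvd fun r hr hrℓ hrn => ?_
  have : Fact r.Prime := ⟨hr⟩
  have : Fact (2 < r) := ⟨hr.two_le.lt_of_ne' (by rintro rfl; omega)⟩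
  have hxℓ : (a : ZMod r) ^ ℓ = -1 := by
    have := (ZMod.natCast_eq_zero_iff _ r).2 (hrℓ.trans (div_dvd_of_dvd (by omega)))
    push_cast at this
    exact eq_neg_of_add_eq_zero_left this
  have hxn : (a : ZMod r) ^ n = 1 := by
    have := (ZMod.natCast_eq_zero_iff _ r).2 hrn
    rw [cast_sub (one_le_pow _ _ ha)] at this
    push_cast at this
    exact sub_eq_zero.1 this
  refine (factorization_two_lt_of_pow_eq_one hn hxn ?_ ?_).not_ge h
  · rw [pow_mul', hxℓ, neg_one_sq]
  · rw [hxℓ]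
    exact ZMod.neg_one_ne_one

theorem not_coprime_half_pow_add_one_of_factorization_two_lt {a ℓ n : ℕ} (ha : Odd a) (ha1 : 1 < a)
    (hℓ : ℓ ≠ 0) (h : ℓ.factorization 2 < n.factorization 2) :
    ¬Coprime ((a ^ ℓ + 1) / 2) (a ^ n - 1) := by
  obtain ⟨t, c, hc, rfl⟩ := exists_eq_two_pow_mul_odd hℓ
  rw [factorization_two_pow_mul_of_odd hc] at h
  have hn : n ≠ 0 := by rintro rfl; simp at h
  obtain ⟨s, rfl⟩ := (prime_two.pow_dvd_iff_le_factorization hn).2 h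
  set b := a ^ 2 ^ t
  have hb : Odd b := ha.pow
  have hb3 : 3 ≤ b := by
    have : a ≤ b := le_self_pow (by positivity) a
    have := odd_iff.1 hb
    omega
  have hbℓ : b + 1 ∣ a ^ (2 ^ t * c) + 1 := by
    simpa only [one_pow, pow_mul] using hc.nat_add_dvd_pow_add_pow b 1
  have hbn : b + 1 ∣ a ^ (2 ^ (t + 1) * s) - 1 := by
    have h1 : b + 1 ∣ b ^ 2 - 1 := ⟨b - 1, by simpa using Nat.sq_sub_sq b 1⟩
    have h2 : b ^ 2 - 1 ∣ (b ^ 2) ^ s - 1 := by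
      simpa only [one_pow] using Nat.sub_dvd_pow_sub_pow _ 1 s
    rw [pow_mul, pow_succ, pow_mul]
    exact h1.trans h2
  intro hcop
  have := eq_one_of_dvd_coprimes hcop (div_dvd_div (even_iff_two_dvd.1 hb.add_one) hbℓ)
    ((div_dvd_of_dvd (even_iff_two_dvd.1 hb.add_one)).trans hbn)
  omega

theorem coprime_half_pow_add_one_pow_sub_one_iff {a ℓ n : ℕ} (ha : Odd a) (ha1 : 1 < a)
    (hℓ : ℓ ≠ 0) (hn : n ≠ 0) :
    Coprime ((a ^ ℓ + 1) / 2) (a ^ n - 1) ↔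
      a ^ ℓ % 4 = 1 ∧ n.factorization 2 ≤ ℓ.factorization 2 := by
  refine ⟨fun h => ⟨?_, ?_⟩, fun h => coprime_half_pow_add_one_of_factorization_two_le
    (by omega) hn h.1 h.2⟩
  · by_contra h4
    have := odd_iff.1 (ha.pow (n := ℓ))
    have := odd_iff.1 (ha.pow (n := n))
    have := eq_one_of_dvd_coprimes h (show 2 ∣ (a ^ ℓ + 1) / 2 by omega)
      (show 2 ∣ a ^ n - 1 by omega)
    omega
  · by_contra! hlt
    exact not_coprime_half_pow_add_one_of_factorization_two_lt ha ha1 hℓ hlt h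

end Nat

theorem stmt_7_general (p ℓ n : ℕ) (hp : p.Prime) (hp2 : p ≠ 2) (hn : 2 ≤ n)
    (F : Type) [Field F] [Fintype F] (hF : Fintype.card F = p ^ n) :
    (Function.Bijective fun x : F => x ^ ((p ^ ℓ + 1) / 2)) ↔
      (ℓ = 0 ∨ (Even ℓ ∧ Odd n) ∨
        (Even ℓ ∧ Even n ∧
          ∀ t₁ u t₂ v : ℕ, Odd u → Odd v → n = 2 ^ t₁ * u → ℓ = 2 ^ t₂ * v → t₁ ≤ t₂) ∨
        (Odd ℓ ∧ Odd n ∧ p % 4 = 1)) := by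
  have hpo : Odd p := hp.odd_of_ne_two hp2
  have hn0 : n ≠ 0 := by omega
  have he : (p ^ ℓ + 1) / 2 ≠ 0 := by have := Nat.one_le_pow ℓ p hp.pos; omega
  rw [pow_bijective_iff_units he, pow_bijective_iff_coprime_card, Nat.card_units,
    Nat.card_eq_fintype_card, hF, Nat.coprime_comm]
  rcases eq_or_ne ℓ 0 with rfl | hℓ
  · simp
  rw [Nat.coprime_half_pow_add_one_pow_sub_one_iff hpo hp.one_lt hℓ hn0,
    Nat.pow_mod_four_eq_one_iff hpo,
    ← Nat.factorization_two_le_iff_forall_eq_two_pow_mul_odd hn0 hℓ,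
    ← Nat.not_odd_iff_even, ← Nat.not_odd_iff_even,
    ← Nat.factorization_two_eq_zero_iff_odd hn0, ← Nat.factorization_two_eq_zero_iff_odd hℓ]
  omega

theorem stmt_7 (p ℓ n : ℕ) (hp : p.Prime) (hp2 : p ≠ 2) (hn : 2 ≤ n) (hℓn : ℓ < n)
    (F : Type) [Field F] [Fintype F] (hF : Fintype.card F = p ^ n) :
    (Function.Bijective fun x : F => x ^ ((p ^ ℓ + 1) / 2)) ↔
      (ℓ = 0 ∨ (Even ℓ ∧ Odd n) ∨
        (Even ℓ ∧ Even n ∧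
          ∀ t₁ u t₂ v : ℕ, Odd u → Odd v → n = 2 ^ t₁ * u → ℓ = 2 ^ t₂ * v → t₁ ≤ t₂) ∨
        (Odd ℓ ∧ Odd n ∧ p % 4 = 1)) :=
  stmt_7_general p ℓ n hp hp2 hn F hF
end

section
/- Let p be an odd prime with p ≡ 1 (mod 4), and let ℓ, n both be odd with 1 ≤ ℓ < n. Then the power map x ↦ x^{(p^ℓ+1)/2} is not perfect (-1)-nonlinear over F_{p^n}; that is, there exists a in F_{p^n} such that x ↦ (x+a)^{(p^ℓ+1)/2} + x^{(p^ℓ+1)/2} is not a permutation of F_{p^n}. -/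
/-!
Take `a = 1` and write `d = (p^ℓ + 1) / 2 = (p - 1)/2 · T + 1` with `T = 1 + p + ⋯ + p^(ℓ-1)`,
which is odd because `ℓ` is. By Euler's criterion, on the prime field `𝔽_p` the power `x ↦ x^d`
fixes the squares and negates the non-squares. Since not every element of `𝔽_p` is a square,
there is a non-square `y` with `y + 1` a square, and then `(y + 1)^d + y^d = (y + 1) - y = 1`,
which is also the value at `x = 0`.
-/

theorem Nat.exists_odd_pow_add_one_div_two {q m : ℕ} (hq : Odd q) (hm : Odd m) :
    ∃ T, Odd T ∧ (q ^ m + 1) / 2 = q / 2 * T + 1 := by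
  obtain ⟨h, rfl⟩ := hq
  refine ⟨∑ i ∈ Finset.range m, (2 * h + 1) ^ i, ?_, ?_⟩
  · rw [Finset.odd_sum_iff_odd_card_odd,
      Finset.filter_true_of_mem fun i _ => Odd.pow ⟨h, rfl⟩, Finset.card_range]
    exact hm
  · have hgeom := geom_sum_mul_add (2 * h) m
    have hq2 : (2 * h + 1) / 2 = h := by omega
    rw [hq2, ← hgeom, Nat.div_eq_of_eq_mul_right two_pos]
    ring

theorem ZMod.exists_not_isSquare_isSquare_add_one {n : ℕ} [NeZero n] {x : ZMod n}
    (hx : ¬IsSquare x) : ∃ y : ZMod n, ¬IsSquare y ∧ IsSquare (y + 1) := by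
  by_contra! H
  have hshift : ∀ k : ℕ, ¬IsSquare (x + k) := by
    intro k
    induction k with
    | zero => simpa using hx
    | succ k ih => simpa [add_assoc] using H _ ih
  simpa [ZMod.natCast_zmod_val] using hshift (-x).val

namespace FiniteField

variable {K : Type*} [Field K] [Fintype K]

theorem pow_card_pow_add_one_div_two_of_isSquare (hK : ringChar K ≠ 2) {m : ℕ} (hm : Odd m)
    {x : K} (hx : IsSquare x) : x ^ ((Fintype.card K ^ m + 1) / 2) = x := by
  obtain ⟨T, -, hd⟩ :=
    Nat.exists_odd_pow_add_one_div_two (Nat.odd_iff.mpr (odd_card_of_char_ne_two hK)) hm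
  rcases eq_or_ne x 0 with rfl | hx0
  · simp [hd]
  · rw [hd, pow_succ, pow_mul, (isSquare_iff hK hx0).mp hx, one_pow, one_mul]

theorem pow_card_pow_add_one_div_two_of_not_isSquare (hK : ringChar K ≠ 2) {m : ℕ}
    (hm : Odd m) {x : K} (hx : ¬IsSquare x) :
    x ^ ((Fintype.card K ^ m + 1) / 2) = -x := by
  obtain ⟨T, hT, hd⟩ :=
    Nat.exists_odd_pow_add_one_div_two (Nat.odd_iff.mpr (odd_card_of_char_ne_two hK)) hm
  have hx0 : x ≠ 0 := by rintro rfl; exact hx IsSquare.zero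
  have hEuler : x ^ (Fintype.card K / 2) = -1 :=
    (pow_dichotomy hK hx0).resolve_left fun h => hx ((isSquare_iff hK hx0).mpr h)
  rw [hd, pow_succ, pow_mul, hEuler, hT.neg_one_pow, neg_one_mul]

theorem pow_add_one_add_pow_eq_one (hK : ringChar K ≠ 2) {m : ℕ} (hm : Odd m) {y : K}
    (hy : ¬IsSquare y) (hy1 : IsSquare (y + 1)) :
    (y + 1) ^ ((Fintype.card K ^ m + 1) / 2) + y ^ ((Fintype.card K ^ m + 1) / 2) = 1 := by
  rw [pow_card_pow_add_one_div_two_of_isSquare hK hm hy1,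
    pow_card_pow_add_one_div_two_of_not_isSquare hK hm hy]
  ring

end FiniteField

theorem stmt_8_general (p ℓ n : ℕ) (hp : p.Prime) (hp4 : p % 4 = 1)
    (hℓodd : Odd ℓ)
    (F : Type) [Field F] [Fintype F] (hF : Fintype.card F = p ^ n) :
    ∃ a : F, ¬ Function.Bijective fun x : F =>
      (x + a) ^ ((p ^ ℓ + 1) / 2) + x ^ ((p ^ ℓ + 1) / 2) := by
  have := Fact.mk hp
  have := charP_of_card_eq_prime_pow hF
  have hp2 : ringChar (ZMod p) ≠ 2 := by rw [ZMod.ringChar_zmod_n]; omega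
  obtain ⟨y, hy, hy1⟩ :=
    ZMod.exists_not_isSquare_isSquare_add_one (FiniteField.exists_nonsquare hp2).choose_spec
  have hsum := FiniteField.pow_add_one_add_pow_eq_one hp2 hℓodd hy hy1
  rw [ZMod.card] at hsum
  have hd : (p ^ ℓ + 1) / 2 ≠ 0 := by have := pow_pos hp.pos ℓ; omega
  let φ := ZMod.castHom (dvd_refl p) F
  refine ⟨1, fun hbij => hy ?_⟩
  have hφy : φ y = 0 := hbij.injective (by simpa [hd] using congrArg φ hsum)
  rw [φ.injective (hφy.trans (map_zero φ).symm)]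
  exact IsSquare.zero

theorem stmt_8 (p ℓ n : ℕ) (hp : p.Prime) (hp4 : p % 4 = 1) (hℓ : 1 ≤ ℓ) (hℓn : ℓ < n)
    (hℓodd : Odd ℓ) (hnodd : Odd n)
    (F : Type) [Field F] [Fintype F] (hF : Fintype.card F = p ^ n) :
    ∃ a : F, ¬ Function.Bijective fun x : F =>
      (x + a) ^ ((p ^ ℓ + 1) / 2) + x ^ ((p ^ ℓ + 1) / 2) :=
  stmt_8_general p ℓ n hp hp4 hℓodd F hF
end

section
/- Let p be a prime, n a positive integer, c in F_p*, d a positive integer, and j in {0, 1, ..., n-1}. Then the c-differential uniformity of x ↦ x^d over F_{p^n} equals the c-differential uniformity of x ↦ x^{d·p^j} over F_{p^n}. Equivalently, for every a, b in F_{p^n} there exists e in F_{p^n} such that {x : (x+a)^d - c·x^d = b} = {x : (x+a)^{d·p^j} - c·x^{d·p^j} = e}, and vice versa. -/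
/-! Raising to the power `p ^ j` is a field automorphism of `F` fixing `c ∈ 𝔽_p`, and it maps
`(x + a) ^ d - c * x ^ d` to `(x + a) ^ (d * p ^ j) - c * x ^ (d * p ^ j)`, so the two
equations with right-hand sides `b` and `b ^ p ^ j` have the same solutions. -/

/-- The `c`-differential uniformity of a function `f` on a finite field:
the maximum over `a, b` (with `a ≠ 0` required only when `c = 1`) of the number of
solutions `x` of `f (x + a) - c * f x = b`. -/
noncomputable def cDiffUnif {F : Type*} [Field F] [Fintype F] (c : F) (f : F → F) : ℕ :=
  sSup {m : ℕ | ∃ a b : F, (c = 1 → a ≠ 0) ∧ m = Nat.card {x : F // f (x + a) - c * f x = b}}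

section RingHomComp

variable {F : Type*} [Field F] (φ : F →+* F) {c : F} (hc : φ c = c) (f : F → F)

include hc in
theorem card_cDiff_solutions_comp_ringHom (a b : F) :
    Nat.card {x : F // φ (f (x + a)) - c * φ (f x) = φ b} =
      Nat.card {x : F // f (x + a) - c * f x = b} := by
  refine Nat.card_congr (Equiv.subtypeEquivRight fun x => ?_)
  conv_lhs => rw [← hc, ← map_mul, ← map_sub]
  exact φ.injective.eq_iff

include hc in
theorem cDiffUnif_comp_ringHom [Fintype F] : cDiffUnif c (φ ∘ f) = cDiffUnif c f := by
  have hφ : Function.Surjective φ := Finite.surjective_of_injective φ.injective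
  unfold cDiffUnif
  congr 1
  ext m
  constructor
  · rintro ⟨a, b, ha, rfl⟩
    obtain ⟨b, rfl⟩ := hφ b
    exact ⟨a, b, ha, card_cDiff_solutions_comp_ringHom φ hc f a b⟩
  · rintro ⟨a, b, ha, rfl⟩
    exact ⟨a, φ b, ha, (card_cDiff_solutions_comp_ringHom φ hc f a b).symm⟩

end RingHomComp

theorem stmt_12_general (p d j : ℕ) (hp : p.Prime)
    (F : Type) [Field F] [Fintype F] [Algebra (ZMod p) F]
    (c : F) (hcFp : ∃ c₀ : ZMod p, c = algebraMap (ZMod p) F c₀) :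
    cDiffUnif c (fun x : F => x ^ d) = cDiffUnif c (fun x : F => x ^ (d * p ^ j)) := by
  have : Fact p.Prime := ⟨hp⟩
  have : CharP F p := charP_of_injective_algebraMap' (ZMod p) p
  have : ExpChar F p := ExpChar.prime hp
  have hc : iterateFrobenius F p j c = c := by
    obtain ⟨c₀, rfl⟩ := hcFp
    rw [iterateFrobenius_def, ← map_pow, ZMod.pow_card_pow]
  have hfrob : (fun x : F => x ^ (d * p ^ j)) = iterateFrobenius F p j ∘ fun x => x ^ d := by
    funext x
    rw [Function.comp_apply, iterateFrobenius_def, pow_mul]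
  rw [hfrob, cDiffUnif_comp_ringHom _ hc]

theorem stmt_12 (p n d j : ℕ) (hp : p.Prime) (hn : 0 < n) (hd : 0 < d) (hj : j < n)
    (F : Type) [Field F] [Fintype F] [Algebra (ZMod p) F] (hF : Fintype.card F = p ^ n)
    (c : F) (hc0 : c ≠ 0) (hcFp : ∃ c₀ : ZMod p, c = algebraMap (ZMod p) F c₀) :
    cDiffUnif c (fun x : F => x ^ d) = cDiffUnif c (fun x : F => x ^ (d * p ^ j)) :=
  stmt_12_general p d j hp F c hcFp
end

section
/- Let p be a prime, c = 1 or c = -1 in F_{p^n}, and d a positive integer with gcd(d, p^n - 1) = 1. Let d' be the multiplicative inverse of d modulo p^n - 1. Then the c-differential uniformity of x ↦ x^d over F_{p^n} equals the c-differential uniformity of x ↦ x^{d'} over F_{p^n}. -/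
theorem pow_eq_self_of_sq_eq_one {M : Type*} [Monoid M] {c : M} (hc : c ^ 2 = 1) {d k : ℕ}
    (h : c ^ (d * k) = c) : c ^ d = c := by
  rcases Nat.even_or_odd' d with ⟨j, rfl | rfl⟩
  · have hd : c ^ (2 * j) = 1 := by rw [pow_mul, hc, one_pow]
    rw [hd, ← h, pow_mul, hd, one_pow]
  · rw [pow_succ, pow_mul, hc, one_pow, one_mul]

theorem FiniteField.pow_eq_self_of_modEq {F : Type*} [Field F] [Fintype F] {m : ℕ}
    (hm : m ≠ 0) (h : m ≡ 1 [MOD Fintype.card F - 1]) (x : F) : x ^ m = x := by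
  rcases eq_or_ne x 0 with rfl | hx
  · exact zero_pow hm
  obtain ⟨k, hk⟩ := (Nat.modEq_iff_dvd' (Nat.one_le_iff_ne_zero.mpr hm)).mp h.symm
  calc x ^ m = (x ^ (Fintype.card F - 1)) ^ k * x := by
        rw [← pow_mul, ← hk, ← pow_succ, Nat.sub_add_cancel (Nat.one_le_iff_ne_zero.mpr hm)]
    _ = x := by rw [pow_card_sub_one_eq_one x hx, one_pow, one_mul]

section CDiff

variable {F : Type*} [Field F] {c : F} (e : F ≃ F)

theorem Equiv.symm_apply_mul_of_apply_mul (he : ∀ x, e (c * x) = c * e x) (y : F) :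
    e.symm (c * y) = c * e.symm y := by
  rw [e.symm_apply_eq, he, e.apply_symm_apply]

theorem card_cDiff_solutions_eq_symm (hc : c ^ 2 = 1) (he : ∀ x, e (c * x) = c * e x)
    (a b : F) :
    Nat.card {x : F // e (x + a) - c * e x = b} =
      Nat.card {y : F // e.symm (y + b) - c * e.symm y = a} := by
  have hc0 : c ≠ 0 := by rintro rfl; simp at hc
  refine Nat.card_congr ((e.trans (Equiv.mulLeft₀ c hc0)).subtypeEquiv fun x => ?_)
  simp only [Equiv.trans_apply, Equiv.mulLeft₀_apply, e.symm_apply_mul_of_apply_mul he,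
    e.symm_apply_apply, ← mul_assoc, ← sq, hc, one_mul]
  rw [sub_eq_iff_eq_add, sub_eq_iff_eq_add', e.symm_apply_eq, add_comm b]
  exact eq_comm

theorem card_cDiff_one_solutions_zero {a : F} (ha : a ≠ 0) :
    Nat.card {x : F // e (x + a) - 1 * e x = 0} = 0 := by
  simp only [one_mul, sub_eq_zero, e.injective.eq_iff, add_eq_left, ha, Nat.card_of_isEmpty]

theorem cDiff_counts_subset_symm (hc : c ^ 2 = 1) (he : ∀ x, e (c * x) = c * e x) :
    {m : ℕ | ∃ a b : F, (c = 1 → a ≠ 0) ∧ m = Nat.card {x : F // e (x + a) - c * e x = b}} ⊆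
      {m : ℕ | ∃ a b : F, (c = 1 → a ≠ 0) ∧
        m = Nat.card {x : F // e.symm (x + a) - c * e.symm x = b}} := by
  rintro _ ⟨a, b, ha, rfl⟩
  by_cases hb : c = 1 → b ≠ 0
  · exact ⟨b, a, hb, card_cDiff_solutions_eq_symm e hc he a b⟩
  · push Not at hb
    obtain ⟨rfl, rfl⟩ := hb
    refine ⟨a, 0, ha, ?_⟩
    rw [card_cDiff_one_solutions_zero e (ha rfl), card_cDiff_one_solutions_zero e.symm (ha rfl)]

theorem cDiffUnif_equiv_symm [Fintype F] (hc : c ^ 2 = 1) (he : ∀ x, e (c * x) = c * e x) :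
    cDiffUnif c e.symm = cDiffUnif c e :=
  congrArg sSup <| subset_antisymm
    (cDiff_counts_subset_symm e.symm hc (e.symm_apply_mul_of_apply_mul he))
    (cDiff_counts_subset_symm e hc he)

end CDiff

theorem stmt_13_general (p n d d' : ℕ) (hd : 0 < d) (hd' : 0 < d')
    (hinv : d * d' ≡ 1 [MOD p ^ n - 1])
    (F : Type) [Field F] [Fintype F] (hF : Fintype.card F = p ^ n)
    (c : F) (hc : c = 1 ∨ c = -1) :
    cDiffUnif c (fun x : F => x ^ d) = cDiffUnif c (fun x : F => x ^ d') := by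
  rw [← hF] at hinv
  have hpow : ∀ x : F, x ^ (d * d') = x :=
    FiniteField.pow_eq_self_of_modEq (by positivity) hinv
  let e : F ≃ F :=
    { toFun := (· ^ d)
      invFun := (· ^ d')
      left_inv := fun x => by simp only [← pow_mul, hpow]
      right_inv := fun x => by simp only [← pow_mul, mul_comm d', hpow] }
  have hc2 : c ^ 2 = 1 := by rcases hc with rfl | rfl <;> norm_num
  have hcd : c ^ d = c := pow_eq_self_of_sq_eq_one hc2 (hpow c)
  exact (cDiffUnif_equiv_symm e hc2 fun x => by simp only [e, Equiv.coe_fn_mk, mul_pow, hcd]).symm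

theorem stmt_13 (p n d d' : ℕ) (hp : p.Prime) (hn : 0 < n) (hd : 0 < d) (hd' : 0 < d')
    (hgcd : Nat.gcd d (p ^ n - 1) = 1) (hinv : d * d' ≡ 1 [MOD p ^ n - 1])
    (F : Type) [Field F] [Fintype F] (hF : Fintype.card F = p ^ n)
    (c : F) (hc : c = 1 ∨ c = -1) :
    cDiffUnif c (fun x : F => x ^ d) = cDiffUnif c (fun x : F => x ^ d') :=
  stmt_13_general p n d d' hd hd' hinv F hF c hc
end

section
/- Let p be a prime, c in F_p with c ≠ 1, let L : F_{p^n} → F_{p^n} be a p-to-1 linearized polynomial (so its kernel has exactly p elements), γ in F_{p^n}*, and f : F_{p^n} → F_p an arbitrary function. Suppose F = L + γ·f (viewing F_p ⊂ F_{p^n}) is a permutation of F_{p^n}. Then F is perfect c-nonlinear if and only if for every nonzero a in F_{p^n} both of the following hold: (i) γ is not in the image of L; and (ii) for all x in F_{p^n} and all nonzero ε in the kernel of L, D_a f(x+ε) ≠ D_a f(x), where D_a f(x) := f(x+a) - c·f(x). -/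
/-!
Write `D_a G x = G (x + a) - c • G x`. For `F = L + f • γ` one computes
`D_a F x = (1 - c) • L x + L a + D_a f x • γ`, so up to a translation `D_a F` has the same shape
`x ↦ L' x + g x • γ` as `F`, with `L' = (1 - c) • L`. A map of this shape is injective exactly
when `g` separates the cosets of `ker L`, provided `γ ∉ range L`: a collision `x ≠ y` forces
`L (x - y) = t • γ`, which is impossible for `t ≠ 0` and makes `x - y` a kernel element for
`t = 0`. Finally, `F` bijective forces `γ ∉ range L`: if `γ = L w` then `F = L ∘ (x ↦ x + f x • w)`
would make the non-injective map `L` surjective on a finite space.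
-/

open Function

section CDeriv

variable {K V W : Type*}

def cDeriv [Add V] [Sub W] [SMul K W] (c : K) (a : V) (G : V → W) (x : V) : W :=
  G (x + a) - c • G x

theorem cDeriv_zero [AddZeroClass V] [Ring K] [AddCommGroup W] [Module K W] (c : K)
    (G : V → W) : cDeriv c 0 G = (1 - c) • G := by
  ext x
  simp [cDeriv, sub_smul]

theorem bijective_cDeriv_zero [AddZeroClass V] [Field K] [AddCommGroup W] [Module K W]
    {c : K} (hc : c ≠ 1) {G : V → W} (hG : Bijective G) : Bijective (cDeriv c 0 G) := by
  rw [cDeriv_zero]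
  exact (IsUnit.smul_bijective (sub_ne_zero.2 hc.symm).isUnit).comp hG

end CDeriv

section LinearAddSmul

variable {K V : Type*} [Field K] [AddCommGroup V] [Module K V]

theorem injective_linear_add_smul_iff {L : V →ₗ[K] V} {γ : V} (hγ : γ ∉ Set.range L)
    (g : V → K) :
    Injective (fun x => L x + g x • γ) ↔ ∀ x ε, ε ≠ 0 → L ε = 0 → g (x + ε) ≠ g x := by
  constructor
  · intro hinj x ε hε hLε hg
    exact hε (add_eq_left.1 (hinj (a₁ := x + ε) (a₂ := x) (by simp [hLε, hg])))
  · intro hsep x y hxy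
    by_contra hne
    have hL : L (x - y) = (g y - g x) • γ := by
      simp only at hxy
      rw [map_sub, sub_smul]
      linear_combination (norm := module) hxy
    rcases eq_or_ne (g y - g x) 0 with ht | ht
    · rw [ht, zero_smul] at hL
      refine hsep y (x - y) (sub_ne_zero.2 hne) hL ?_
      rw [add_sub_cancel]
      exact (sub_eq_zero.1 ht).symm
    · refine hγ ⟨(g y - g x)⁻¹ • (x - y), ?_⟩
      rw [map_smul, hL, smul_smul, inv_mul_cancel₀ ht, one_smul]

theorem notMem_range_of_bijective_linear_add_smul [Finite V] {L : V →ₗ[K] V}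
    (hL : ¬ Injective L) {γ : V} {f : V → K} (hbij : Bijective (fun x => L x + f x • γ)) :
    γ ∉ Set.range L := by
  rintro ⟨w, rfl⟩
  refine hL (Finite.injective_iff_surjective.2 (Surjective.of_comp (g := fun x => x + f x • w) ?_))
  convert hbij.2 using 1
  ext x
  simp

theorem cDeriv_linear_add_smul (L : V →ₗ[K] V) (γ : V) (f : V → K) (c : K) (a : V) :
    cDeriv c a (fun x => L x + f x • γ) =
      (· + L a) ∘ fun x => ((1 - c) • L) x + cDeriv c a f x • γ := by
  ext x
  simp only [cDeriv, comp_apply, map_add, LinearMap.smul_apply, smul_eq_mul]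
  module

theorem bijective_cDeriv_linear_add_smul_iff [Finite V] {c : K} (hc : c ≠ 1) {L : V →ₗ[K] V}
    {γ : V} (hγ : γ ∉ Set.range L) (f : V → K) (a : V) :
    Bijective (cDeriv c a (fun x => L x + f x • γ)) ↔
      ∀ x ε, ε ≠ 0 → L ε = 0 → cDeriv c a f (x + ε) ≠ cDeriv c a f x := by
  have hu : 1 - c ≠ 0 := sub_ne_zero.2 hc.symm
  have hγ' : γ ∉ Set.range ((1 - c) • L) := by
    rintro ⟨w, hw⟩
    exact hγ ⟨(1 - c) • w, by rwa [map_smul]⟩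
  rw [← Finite.injective_iff_bijective, cDeriv_linear_add_smul,
    (add_left_injective (L a)).of_comp_iff, injective_linear_add_smul_iff hγ']
  simp only [LinearMap.smul_apply, smul_eq_zero, hu, false_or]

end LinearAddSmul

theorem stmt_16_general (p : ℕ) (hp : p.Prime)
    (F : Type) [Field F] [Fintype F] [Algebra (ZMod p) F]
    (c₀ : ZMod p) (hc : c₀ ≠ 1)
    (L : F → F) (hLadd : ∀ x y, L (x + y) = L x + L y)
    (hLsmul : ∀ (s : ZMod p) (x : F),
      L (algebraMap (ZMod p) F s * x) = algebraMap (ZMod p) F s * L x)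
    (hker : Nat.card {x : F // L x = 0} = p)
    (γ : F) (f : F → ZMod p)
    (hperm : Function.Bijective fun x : F => L x + γ * algebraMap (ZMod p) F (f x)) :
    (∀ a : F, Function.Bijective fun x : F =>
        (L (x + a) + γ * algebraMap (ZMod p) F (f (x + a))) -
          algebraMap (ZMod p) F c₀ * (L x + γ * algebraMap (ZMod p) F (f x))) ↔
      ∀ a : F, a ≠ 0 →
        (γ ∉ Set.range L ∧
          ∀ x ε : F, ε ≠ 0 → L ε = 0 →
            f (x + ε + a) - c₀ * f (x + ε) ≠ f (x + a) - c₀ * f x) := by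
  have := Fact.mk hp
  let ℓ : F →ₗ[ZMod p] F := ⟨⟨L, hLadd⟩, by simpa [Algebra.smul_def] using hLsmul⟩
  have hΦ : (fun x => L x + γ * algebraMap (ZMod p) F (f x)) = fun x => ℓ x + f x • γ := by
    ext x
    simp [ℓ, Algebra.smul_def, mul_comm]
  have hℓ : ¬ Injective ℓ := fun hinj => by
    have : Subsingleton {x : F // L x = 0} := ⟨fun x y => Subtype.ext (hinj (x.2.trans y.2.symm))⟩
    have hlt := hp.one_lt
    rw [← hker, Finite.one_lt_card_iff_nontrivial] at hlt
    exact not_nontrivial _ hlt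
  rw [hΦ] at hperm
  have hγL : γ ∉ Set.range L := notMem_range_of_bijective_linear_add_smul hℓ hperm
  simp_rw [← Algebra.smul_def]
  change (∀ a, Bijective (cDeriv c₀ a fun x => L x + γ * algebraMap (ZMod p) F (f x))) ↔
    ∀ a ≠ 0, γ ∉ Set.range L ∧
      ∀ x ε, ε ≠ 0 → L ε = 0 → cDeriv c₀ a f (x + ε) ≠ cDeriv c₀ a f x
  rw [hΦ]
  refine ⟨fun h a _ => ⟨hγL, (bijective_cDeriv_linear_add_smul_iff hc hγL f a).1 (h a)⟩,
    fun h a => ?_⟩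
  rcases eq_or_ne a 0 with rfl | ha
  · exact bijective_cDeriv_zero hc hperm
  · exact (bijective_cDeriv_linear_add_smul_iff hc hγL f a).2 (h a ha).2

theorem stmt_16 (p n : ℕ) (hp : p.Prime) (hn : 0 < n)
    (F : Type) [Field F] [Fintype F] [Algebra (ZMod p) F] (hF : Fintype.card F = p ^ n)
    (c₀ : ZMod p) (hc : c₀ ≠ 1)
    (L : F → F) (hLadd : ∀ x y, L (x + y) = L x + L y)
    (hLsmul : ∀ (s : ZMod p) (x : F),
      L (algebraMap (ZMod p) F s * x) = algebraMap (ZMod p) F s * L x)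
    (hker : Nat.card {x : F // L x = 0} = p)
    (γ : F) (hγ : γ ≠ 0) (f : F → ZMod p)
    (hperm : Function.Bijective fun x : F => L x + γ * algebraMap (ZMod p) F (f x)) :
    (∀ a : F, Function.Bijective fun x : F =>
        (L (x + a) + γ * algebraMap (ZMod p) F (f (x + a))) -
          algebraMap (ZMod p) F c₀ * (L x + γ * algebraMap (ZMod p) F (f x))) ↔
      ∀ a : F, a ≠ 0 →
        (γ ∉ Set.range L ∧
          ∀ x ε : F, ε ≠ 0 → L ε = 0 →
            f (x + ε + a) - c₀ * f (x + ε) ≠ f (x + a) - c₀ * f x) :=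
  stmt_16_general p hp F c₀ hc L hLadd hLsmul hker γ f hperm
end

section
/- Let p be a prime, n a positive integer, and α, γ in F_{p^n}. Define F(x) = x + γ·Tr(x^p - α·x), where Tr is the absolute trace from F_{p^n} to F_p (with F_p embedded in F_{p^n}). Then F is perfect c-nonlinear for all c in F_{p^n} with c ≠ 1 if and only if Tr(γ·(1 - α)) ≠ -1. -/
/-!
Since `Tr (x ^ p) = Tr x`, the map `G x = x + γ Tr (x ^ p - α x)` is the transvection
`x ↦ x + Tr ((1 - α) x) γ` of `F` over `ZMod p`. It is additive, so
`G (x + a) - c G x = (1 - c) G x + G a`, which for `c ≠ 1` is a bijection exactly when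
`G` is. A transvection `x ↦ x + f x • v` is bijective iff `f v ≠ -1`: for `f v = -1` it
kills `v ≠ 0`, and otherwise it is invertible with inverse `x ↦ x - (1 + f v)⁻¹ f x • v`.
-/

open Function

theorem LinearMap.transvection_bijective_iff {K V : Type*} [DivisionRing K] [AddCommGroup V]
    [Module K V] (f : Module.Dual K V) (v : V) :
    Bijective (transvection f v) ↔ f v ≠ -1 := by
  refine ⟨fun hbij hfv => ?_, fun hfv => ?_⟩
  · have hv : v ≠ 0 := by
      rintro rfl
      simp at hfv
    apply hv (hbij.injective _)
    rw [transvection.apply, transvection.apply, hfv, map_zero, neg_one_smul, add_neg_cancel,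
      zero_smul, add_zero]
  · have hunit : IsUnit (1 + f v) := Ne.isUnit fun h => hfv (eq_neg_of_add_eq_zero_right h)
    exact (LinearEquiv.dilatransvection hunit).bijective

theorem Algebra.trace_pow_card {K L : Type*} [Field K] [Fintype K] [Field L] [Algebra K L]
    [Algebra.IsAlgebraic K L] (x : L) :
    Algebra.trace K L (x ^ Fintype.card K) = Algebra.trace K L x :=
  Algebra.trace_eq_of_algEquiv (FiniteField.frobeniusAlgEquivOfAlgebraic K L) x

theorem bijective_mul_add_iff {α K : Type*} [DivisionRing K] {u : K} (hu : u ≠ 0) (b : K)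
    (g : α → K) : Bijective (fun x => u * g x + b) ↔ Bijective g :=
  ((Equiv.mulLeft₀ u hu).trans (Equiv.addRight b)).comp_bijective g

theorem add_mul_trace_pow_sub_eq_transvection {p : ℕ} [Fact p.Prime] {F : Type*} [Field F]
    [Algebra (ZMod p) F] [Algebra.IsAlgebraic (ZMod p) F] (α γ x : F) :
    x + γ * algebraMap (ZMod p) F (Algebra.trace (ZMod p) F (x ^ p - α * x)) =
      LinearMap.transvection (Algebra.traceForm (ZMod p) F (1 - α)) γ x := by
  have htrace := Algebra.trace_pow_card (K := ZMod p) x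
  rw [ZMod.card] at htrace
  have hlin :
      Algebra.trace (ZMod p) F (x ^ p - α * x) = Algebra.trace (ZMod p) F ((1 - α) * x) := by
    rw [sub_mul, one_mul, map_sub, map_sub, htrace]
  rw [LinearMap.transvection.apply, Algebra.traceForm_apply, Algebra.smul_def, hlin, mul_comm γ]

theorem stmt_17_general (p : ℕ) (hp : p.Prime)
    (F : Type) [Field F] [Fintype F] [Algebra (ZMod p) F]
    (α γ : F) :
    (∀ c : F, c ≠ 1 → ∀ a : F, Function.Bijective fun x : F =>
        ((x + a) + γ * algebraMap (ZMod p) F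
            (Algebra.trace (ZMod p) F ((x + a) ^ p - α * (x + a)))) -
          c * (x + γ * algebraMap (ZMod p) F (Algebra.trace (ZMod p) F (x ^ p - α * x)))) ↔
      Algebra.trace (ZMod p) F (γ * (1 - α)) ≠ -1 := by
  have : Fact p.Prime := ⟨hp⟩
  set G := LinearMap.transvection (Algebra.traceForm (ZMod p) F (1 - α)) γ
  have hderiv : ∀ c a : F, (fun x : F =>
      ((x + a) + γ * algebraMap (ZMod p) F
          (Algebra.trace (ZMod p) F ((x + a) ^ p - α * (x + a)))) -
        c * (x + γ * algebraMap (ZMod p) F (Algebra.trace (ZMod p) F (x ^ p - α * x)))) =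
      fun x => (1 - c) * G x + G a := by
    intro c a
    funext x
    rw [add_mul_trace_pow_sub_eq_transvection, add_mul_trace_pow_sub_eq_transvection, map_add]
    ring
  have hG : Bijective G ↔ Algebra.trace (ZMod p) F (γ * (1 - α)) ≠ -1 := by
    rw [LinearMap.transvection_bijective_iff, Algebra.traceForm_apply, mul_comm]
  simp_rw [hderiv, ← hG]
  refine ⟨fun h => ?_, fun h c hc a => ?_⟩
  · simpa using h 0 zero_ne_one 0
  · exact (bijective_mul_add_iff (sub_ne_zero.mpr hc.symm) _ _).mpr h

theorem stmt_17 (p n : ℕ) (hp : p.Prime) (hn : 0 < n)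
    (F : Type) [Field F] [Fintype F] [Algebra (ZMod p) F] (hF : Fintype.card F = p ^ n)
    (α γ : F) :
    (∀ c : F, c ≠ 1 → ∀ a : F, Function.Bijective fun x : F =>
        ((x + a) + γ * algebraMap (ZMod p) F
            (Algebra.trace (ZMod p) F ((x + a) ^ p - α * (x + a)))) -
          c * (x + γ * algebraMap (ZMod p) F (Algebra.trace (ZMod p) F (x ^ p - α * x)))) ↔
      Algebra.trace (ZMod p) F (γ * (1 - α)) ≠ -1 :=
  stmt_17_general p hp F α γ
end
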